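/- Let W be a finite Coxeter group and [u, w] a noncritical Bruhat interval, i.e., D_L(w) ⊄ D_L(u) or D_R(w) ⊄ D_R(u). Then Σ_{v ∈ [u,w]} (−1)^{out_w(v)} = 0, where out_w(v) is the number of v' ∈ [u,w] with v → v' in the Bruhat graph on [e,w]. -/

import Mathlib

open CoxeterSystem

variable {B W : Type*} [Group W] {M : CoxeterMatrix B}

/-- A directed edge of the Bruhat graph: `v = t * u` for a reflection `t`, with length increase. -/
def bruhatEdge (cs : CoxeterSystem M W) (u v : W) : Prop :=
  ∃ t : W, cs.IsReflection t ∧ v = t * u ∧ cs.length u < cs.length v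

/-- Bruhat order: reflexive-transitive closure of Bruhat edges. -/
def bruhatLE (cs : CoxeterSystem M W) : W → W → Prop :=
  Relation.ReflTransGen (bruhatEdge cs)

/-- The standard parabolic subgroup generated by the simple reflections indexed by `I`. -/
def parabolic (cs : CoxeterSystem M W) (I : Set B) : Subgroup W :=
  Subgroup.closure (cs.simple '' I)

/-- The parabolic double coset `W_I x W_J`. -/
def doubleCoset (cs : CoxeterSystem M W) (I J : Set B) (x : W) : Set W :=
  {w | ∃ u ∈ parabolic cs I, ∃ v ∈ parabolic cs J, w = u * x * v}

/-!
If `sᵢ` is a left descent of `w` but not of `u`, the lifting property of the Bruhat order makes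
`v ↦ sᵢ v` a fixed-point-free involution of `[u, w]`. When `v < sᵢ v`, the edge `v → sᵢ v` lies in
the interval and every other edge `v → v'` is carried to an edge `sᵢ v → sᵢ v'`, so
`out_w(v) = out_w(sᵢ v) + 1` and the terms of `v` and `sᵢ v` cancel. Right descents reduce to left
ones through `v ↦ v⁻¹`, an automorphism of the Bruhat graph.

Carrying edges along `sᵢ` needs `ℓ x < ℓ (t x) ↔ ℓ (sᵢ x) < ℓ (sᵢ t x)` for reflections `t ≠ sᵢ`.
This comes from the reflection cocycle: `W` acts on `W × {±1}` with `sᵢ` sending `(t, ε)` to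
`(sᵢ t sᵢ, ε)`, the sign flipped exactly when `t = sᵢ`, and the sign picked up by `(t, 1)` under `w`
is `-1` exactly when `t` is a right inversion of `w`.
-/

namespace CoxeterSystem

open scoped Classical

variable (cs : CoxeterSystem M W)

local prefix:100 "s" => cs.simple
local prefix:100 "π" => cs.wordProd
local prefix:100 "ℓ" => cs.length
local prefix:100 "lis" => cs.leftInvSeq

theorem simple_mul_mul_simple_eq_simple_iff (i : B) (t : W) : s i * t * s i = s i ↔ t = s i := by
  constructor
  · intro h
    simpa [mul_assoc] using congr(s i * $h * s i)
  · rintro rfl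
    simp

theorem simple_mul_simple_mul_mul_simple_mul_simple (i : B) (t : W) :
    s i * (s i * t * s i) * s i = t := by
  simp [mul_assoc]

variable {cs} in
theorem IsReflection.simple_conj {t : W} (ht : cs.IsReflection t) (i : B) :
    cs.IsReflection (s i * t * s i) := by
  simpa using ht.conj (s i)

noncomputable def reflectionPerm (i : B) : Equiv.Perm (W × ℤˣ) :=
  Function.Involutive.toPerm (fun p => (s i * p.1 * s i, if p.1 = s i then -p.2 else p.2)) <| by
    rintro ⟨t, ε⟩
    simp only [simple_mul_mul_simple_eq_simple_iff, simple_mul_simple_mul_mul_simple_mul_simple]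
    split_ifs <;> simp

theorem reflectionPerm_apply (i : B) (t : W) (ε : ℤˣ) :
    cs.reflectionPerm i (t, ε) = (s i * t * s i, if t = s i then -ε else ε) :=
  rfl

theorem prod_map_reflectionPerm_apply (ω : List B) (t : W) (ε : ℤˣ) :
    (ω.map cs.reflectionPerm).prod (t, ε) =
      (π ω * t * (π ω)⁻¹, (-1) ^ (lis ω).count (π ω * t * (π ω)⁻¹) * ε) := by
  induction ω with
  | nil => simp
  | cons i ω ih =>
    rw [List.map_cons, List.prod_cons, Equiv.Perm.mul_apply, ih]
    set x := π ω * t * (π ω)⁻¹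
    have hx : π (i :: ω) * t * (π (i :: ω))⁻¹ = s i * x * s i := by
      simp [x, wordProd_cons, mul_assoc]
    have hcount : (lis (i :: ω)).count (s i * x * s i) =
        (lis ω).count x + if x = s i then 1 else 0 := by
      rw [leftInvSeq, List.count_cons]
      have hconj : s i * x * s i = MulAut.conj (s i) x := by simp
      rw [hconj, List.count_map_of_injective _ _ (MulAut.conj (s i)).injective, ← hconj]
      simp only [beq_iff_eq, eq_comm (a := s i), simple_mul_mul_simple_eq_simple_iff]
    rw [reflectionPerm_apply, hx, hcount, pow_add]
    split_ifs <;> simp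

theorem prod_map_reflectionPerm_alternatingWord (i i' : B) (m : ℕ) :
    ((alternatingWord i i' (2 * m)).map cs.reflectionPerm).prod =
      (cs.reflectionPerm i * cs.reflectionPerm i') ^ m := by
  induction m with
  | zero => simp [alternatingWord]
  | succ m ih =>
    rw [Nat.mul_succ, alternatingWord_succ', alternatingWord_succ']
    simp [ih, pow_succ', mul_assoc]

theorem even_count_leftInvSeq_alternatingWord (i i' : B) (x : W) :
    Even ((lis (alternatingWord i i' (2 * M i i'))).count x) := by
  set f : ℕ → W := fun k => π (alternatingWord i' i (2 * k + 1))
  have hlis : lis (alternatingWord i i' (2 * M i i')) = (List.range (2 * M i i')).map f :=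
    List.ext_getElem (by simp) fun k _ hk => by
      simp only [List.getElem_map, List.getElem_range]
      exact cs.getElem_leftInvSeq_alternatingWord i i' _ k (by simpa using hk)
  have hperiod : f ∘ (M i i' + ·) = f := by
    funext k
    simp only [f, Function.comp_apply, prod_alternatingWord_eq_mul_pow]
    rw [show (2 * (M i i' + k) + 1) / 2 = M i i' + k by omega,
      show (2 * k + 1) / 2 = k by omega, pow_add, simple_mul_simple_pow', one_mul]
    simp
  rw [hlis, two_mul, List.range_add, List.map_append, List.count_append, List.map_map, hperiod]
  exact ⟨_, rfl⟩

theorem isLiftable_reflectionPerm : M.IsLiftable cs.reflectionPerm := by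
  intro i i'
  rw [← prod_map_reflectionPerm_alternatingWord]
  ext ⟨t, ε⟩ : 1
  have hπ : π (alternatingWord i i' (2 * M i i')) = 1 := by
    rw [prod_alternatingWord_eq_mul_pow]
    simp
  rw [prod_map_reflectionPerm_apply, hπ,
    Even.neg_one_pow (cs.even_count_leftInvSeq_alternatingWord i i' _)]
  simp

noncomputable def reflectionRep : W →* Equiv.Perm (W × ℤˣ) :=
  cs.lift ⟨cs.reflectionPerm, cs.isLiftable_reflectionPerm⟩

theorem reflectionRep_simple (i : B) : cs.reflectionRep (s i) = cs.reflectionPerm i :=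
  cs.lift_apply_simple cs.isLiftable_reflectionPerm i

theorem reflectionRep_wordProd (ω : List B) :
    cs.reflectionRep (π ω) = (ω.map cs.reflectionPerm).prod := by
  rw [wordProd, map_list_prod, List.map_map]
  congr 1
  exact List.map_congr_left fun i _ => cs.reflectionRep_simple i

noncomputable def reflectionCocycle (w t : W) : ℤˣ := (cs.reflectionRep w (t, 1)).2

theorem reflectionCocycle_wordProd (ω : List B) (t : W) :
    cs.reflectionCocycle (π ω) t = (-1) ^ (lis ω).count (π ω * t * (π ω)⁻¹) := by
  simp [reflectionCocycle, reflectionRep_wordProd, prod_map_reflectionPerm_apply]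

theorem reflectionRep_apply (w t : W) (ε : ℤˣ) :
    cs.reflectionRep w (t, ε) = (w * t * w⁻¹, cs.reflectionCocycle w t * ε) := by
  obtain ⟨ω, rfl⟩ := cs.wordProd_surjective w
  simp [reflectionCocycle_wordProd, reflectionRep_wordProd, prod_map_reflectionPerm_apply]

theorem reflectionCocycle_one (t : W) : cs.reflectionCocycle 1 t = 1 := by
  simp [reflectionCocycle]

theorem reflectionCocycle_simple (i : B) (t : W) :
    cs.reflectionCocycle (s i) t = if t = s i then -1 else 1 := by
  simp [reflectionCocycle, reflectionRep_simple, reflectionPerm_apply]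

theorem reflectionCocycle_mul (x y t : W) :
    cs.reflectionCocycle (x * y) t =
      cs.reflectionCocycle x (y * t * y⁻¹) * cs.reflectionCocycle y t := by
  have h := cs.reflectionRep_apply (x * y) t 1
  rw [map_mul, Equiv.Perm.mul_apply, reflectionRep_apply, reflectionRep_apply] at h
  simpa using (congrArg Prod.snd h).symm

theorem reflectionCocycle_self {t : W} (ht : cs.IsReflection t) :
    cs.reflectionCocycle t t = -1 := by
  obtain ⟨u, i, rfl⟩ := ht
  have hcancel : cs.reflectionCocycle u (s i) * cs.reflectionCocycle u⁻¹ (u * s i * u⁻¹) = 1 := by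
    simpa [reflectionCocycle_one, mul_assoc] using
      (cs.reflectionCocycle_mul u u⁻¹ (u * s i * u⁻¹)).symm
  rw [reflectionCocycle_mul, reflectionCocycle_mul, reflectionCocycle_simple]
  have hsi : u⁻¹ * (u * s i * u⁻¹) * u⁻¹⁻¹ = s i := by group
  rw [hsi, if_pos rfl, inv_simple, simple_mul_simple_self, one_mul, mul_right_comm, hcancel,
    one_mul]

theorem isRightInversion_iff_reflectionCocycle {t : W} (ht : cs.IsReflection t) (w : W) :
    cs.IsRightInversion w t ↔ cs.reflectionCocycle w t = -1 := by
  have of_cocycle : ∀ w, cs.reflectionCocycle w t = -1 → cs.IsRightInversion w t := by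
    intro w hw
    obtain ⟨ω, hω, rfl⟩ := cs.exists_isReduced w
    rw [reflectionCocycle_wordProd] at hw
    have hmem : π ω * t * (π ω)⁻¹ ∈ lis ω := by
      refine List.count_pos_iff.mp (Nat.pos_of_ne_zero fun h0 => ?_)
      simp [h0] at hw
    exact ⟨ht, by simpa using (cs.isLeftInversion_of_mem_leftInvSeq hω hmem).2⟩
  refine ⟨fun hinv => ?_, of_cocycle w⟩
  by_contra hne
  have hwt : cs.reflectionCocycle (w * t) t = -1 := by
    rw [reflectionCocycle_mul, reflectionCocycle_self cs ht, ht.inv, mul_assoc, ht.mul_self,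
      mul_one, (Int.units_eq_one_or _).resolve_right hne, one_mul]
  have := (of_cocycle (w * t) hwt).2
  rw [mul_assoc, ht.mul_self, mul_one] at this
  exact absurd hinv.2 (by omega)

theorem length_lt_iff_length_simple_mul_lt {t : W} (ht : cs.IsReflection t) {i : B}
    (hne : t ≠ s i) (x : W) : ℓ x < ℓ (t * x) ↔ ℓ (s i * x) < ℓ (s i * (t * x)) := by
  have hconj : s i * t * s i * (s i * x) = s i * (t * x) := by simp [mul_assoc]
  have key : cs.IsLeftInversion (s i * x) (s i * t * s i) ↔ cs.IsLeftInversion x t := by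
    rw [← isRightInversion_inv_iff, ← isRightInversion_inv_iff,
      isRightInversion_iff_reflectionCocycle cs (ht.simple_conj i),
      isRightInversion_iff_reflectionCocycle cs ht, mul_inv_rev, inv_simple,
      reflectionCocycle_mul, reflectionCocycle_simple,
      if_neg (mt (simple_mul_mul_simple_eq_simple_iff cs i t).1 hne), mul_one, inv_simple,
      simple_mul_simple_mul_mul_simple_mul_simple]
  simp only [IsLeftInversion, ht, ht.simple_conj i, true_and, hconj] at key
  have h1 : ℓ (t * x) ≠ ℓ x := ht.length_mul_right_ne x
  have h2 : ℓ (s i * (t * x)) ≠ ℓ (s i * x) := by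
    simpa [hconj] using (ht.simple_conj i).length_mul_right_ne (s i * x)
  omega

end CoxeterSystem

section BruhatOrder

variable {cs : CoxeterSystem M W}

local prefix:100 "s" => cs.simple
local prefix:100 "ℓ" => cs.length

theorem bruhatEdge.length_lt {x y : W} (h : bruhatEdge cs x y) : ℓ x < ℓ y :=
  let ⟨_, _, _, hlt⟩ := h
  hlt

theorem bruhatEdge_simple_mul_of_not_isLeftDescent {x : W} {i : B} (h : ¬cs.IsLeftDescent x i) :
    bruhatEdge cs x (s i * x) :=
  ⟨s i, cs.isReflection_simple i, rfl, by rw [not_isLeftDescent_iff] at h; omega⟩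

theorem bruhatEdge_simple_mul_of_isLeftDescent {x : W} {i : B} (h : cs.IsLeftDescent x i) :
    bruhatEdge cs (s i * x) x :=
  ⟨s i, cs.isReflection_simple i, by simp, h⟩

theorem bruhatEdge.simple_mul {x y : W} (h : bruhatEdge cs x y) {i : B} (hne : y ≠ s i * x) :
    bruhatEdge cs (s i * x) (s i * y) := by
  obtain ⟨t, ht, rfl, hlt⟩ := h
  have hts : t ≠ s i := by rintro rfl; exact hne rfl
  exact ⟨s i * t * s i, ht.simple_conj i, by simp [mul_assoc],
    (cs.length_lt_iff_length_simple_mul_lt ht hts x).1 hlt⟩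

theorem bruhatEdge.inv {x y : W} (h : bruhatEdge cs x y) : bruhatEdge cs x⁻¹ y⁻¹ := by
  obtain ⟨t, ht, rfl, hlt⟩ := h
  exact ⟨x⁻¹ * t * x, by simpa using ht.conj x⁻¹, by rw [mul_inv_rev, ht.inv]; group,
    by rwa [length_inv, length_inv]⟩

theorem bruhatEdge_inv_iff {x y : W} : bruhatEdge cs x⁻¹ y⁻¹ ↔ bruhatEdge cs x y :=
  ⟨fun h => by simpa using h.inv, bruhatEdge.inv⟩

theorem bruhatLE.inv {x y : W} (h : bruhatLE cs x y) : bruhatLE cs x⁻¹ y⁻¹ :=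
  Relation.ReflTransGen.lift (·⁻¹) (fun _ _ => bruhatEdge.inv) _ _ h

theorem bruhatLE_inv_iff {x y : W} : bruhatLE cs x⁻¹ y⁻¹ ↔ bruhatLE cs x y :=
  ⟨fun h => by simpa using h.inv, bruhatLE.inv⟩

theorem bruhatLE.simple_mul_or {x y : W} (h : bruhatLE cs x y) (i : B) :
    bruhatLE cs (s i * x) (s i * y) ∨ bruhatLE cs (s i * x) y ∧ bruhatLE cs x (s i * y) := by
  induction h using Relation.ReflTransGen.head_induction_on with
  | refl => exact Or.inl .refl
  | @head x z hxz hzy ih =>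
    by_cases hz : z = s i * x
    · subst hz
      rw [simple_mul_simple_cancel_left] at ih
      exact ih.elim (fun h => Or.inr ⟨hzy, h⟩) (fun h => Or.inl h.2)
    · have hsxz := hxz.simple_mul hz
      exact ih.imp (fun h => .head hsxz h) (fun h => ⟨.head hsxz h.1, .head hxz h.2⟩)

theorem bruhatLE.le_simple_mul {x y : W} (h : bruhatLE cs x y) {i : B}
    (hx : ¬cs.IsLeftDescent x i) : bruhatLE cs x (s i * y) :=
  (h.simple_mul_or i).elim (fun h => .head (bruhatEdge_simple_mul_of_not_isLeftDescent hx) h)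
    And.right

theorem bruhatLE.simple_mul_le {x y : W} (h : bruhatLE cs x y) {i : B}
    (hy : cs.IsLeftDescent y i) : bruhatLE cs (s i * x) y :=
  (h.simple_mul_or i).elim (fun h => .tail h (bruhatEdge_simple_mul_of_isLeftDescent hy))
    And.left

end BruhatOrder

section SignReversingInvolution

variable {α : Type*} {E : α → α → Prop} {σ : α → α}

theorem ncard_setOf_mem_and_eq_ncard_setOf_mem_and_add_one {S : Finset α}
    (hσ : Function.Involutive σ) (hσS : ∀ v ∈ S, σ v ∈ S)
    (htransport : ∀ x y, y ≠ σ x → E x y → E (σ x) (σ y))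
    {v : α} (hv : v ∈ S) (hedge : E v (σ v)) (hback : ¬E (σ v) v) :
    {y | y ∈ S ∧ E v y}.ncard = {y | y ∈ S ∧ E (σ v) y}.ncard + 1 := by
  have hout : {y | y ∈ S ∧ E v y} = insert (σ v) (σ '' {y | y ∈ S ∧ E (σ v) y}) := by
    ext y
    constructor
    · rintro ⟨hy, hvy⟩
      by_cases hyv : y = σ v
      · exact .inl hyv
      · exact .inr ⟨σ y, ⟨hσS y hy, htransport v y hyv hvy⟩, hσ y⟩
    · rintro (rfl | ⟨y, ⟨hy, hvy⟩, rfl⟩)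
      · exact ⟨hσS v hv, hedge⟩
      · have hyv : y ≠ σ (σ v) := by rw [hσ]; rintro rfl; exact hback hvy
        refine ⟨hσS y hy, ?_⟩
        simpa [hσ v] using htransport (σ v) y hyv hvy
  have hnotMem : σ v ∉ σ '' {y | y ∈ S ∧ E (σ v) y} := by
    rw [hσ.injective.mem_set_image]
    exact fun h => hback h.2
  rw [hout, Set.ncard_insert_of_notMem hnotMem ((S.finite_toSet.subset fun _ h => h.1).image σ),
    Set.ncard_image_of_injective _ hσ.injective]

theorem sum_neg_one_pow_ncard_eq_zero_of_involution (S : Finset α) (r : α → ℕ)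
    (hσ : Function.Involutive σ) (hσS : ∀ v ∈ S, σ v ∈ S) (hE : ∀ x y, E x y → r x < r y)
    (hσr : ∀ v, r (σ v) ≠ r v) (hσE : ∀ v, r v < r (σ v) → E v (σ v))
    (htransport : ∀ x y, y ≠ σ x → E x y → E (σ x) (σ y)) :
    ∑ v ∈ S, (-1 : ℤ) ^ {y | y ∈ S ∧ E v y}.ncard = 0 := by
  have hpair : ∀ v ∈ S, r v < r (σ v) →
      (-1 : ℤ) ^ {y | y ∈ S ∧ E v y}.ncard + (-1) ^ {y | y ∈ S ∧ E (σ v) y}.ncard = 0 := by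
    intro v hv hlt
    rw [ncard_setOf_mem_and_eq_ncard_setOf_mem_and_add_one hσ hσS htransport hv
      (hσE v hlt) fun h => (hE _ _ h).not_gt hlt, pow_succ]
    ring
  refine Finset.sum_involution (fun v _ => σ v) (fun v hv => ?_) (fun v _ _ h => hσr v (by rw [h]))
    hσS (fun v _ => hσ v)
  rcases (hσr v).lt_or_gt with hlt | hgt
  · have := hpair (σ v) (hσS v hv) (by rwa [hσ])
    rwa [hσ, add_comm] at this
  · exact hpair v hv hgt

end SignReversingInvolution

section BruhatInterval

variable (cs : CoxeterSystem M W)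

open scoped Classical in
noncomputable def bruhatInterval [Fintype W] (u w : W) : Finset W :=
  Finset.univ.filter fun v => bruhatLE cs u v ∧ bruhatLE cs v w

noncomputable def outDegree (u w v : W) : ℕ :=
  {v' | bruhatLE cs u v' ∧ bruhatLE cs v' w ∧ bruhatEdge cs v v'}.ncard

theorem outDegree_inv (u w v : W) : outDegree cs u⁻¹ w⁻¹ v⁻¹ = outDegree cs u w v := by
  rw [outDegree, ← Set.ncard_inv]
  congr 1
  ext v'
  simp only [Set.mem_inv, Set.mem_ofPred_eq]
  rw [← bruhatLE_inv_iff, ← bruhatLE_inv_iff (x := v'⁻¹), ← bruhatEdge_inv_iff]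
  simp only [inv_inv]

variable [Fintype W]

theorem mem_bruhatInterval {u w v : W} :
    v ∈ bruhatInterval cs u w ↔ bruhatLE cs u v ∧ bruhatLE cs v w := by
  simp [bruhatInterval]

theorem outDegree_eq_ncard (u w v : W) :
    outDegree cs u w v = {v' | v' ∈ bruhatInterval cs u w ∧ bruhatEdge cs v v'}.ncard := by
  simp only [outDegree, mem_bruhatInterval, and_assoc]

theorem sum_bruhatInterval_inv (u w : W) :
    ∑ v ∈ bruhatInterval cs u⁻¹ w⁻¹, (-1 : ℤ) ^ outDegree cs u⁻¹ w⁻¹ v =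
      ∑ v ∈ bruhatInterval cs u w, (-1 : ℤ) ^ outDegree cs u w v := by
  refine Finset.sum_nbij' (·⁻¹) (·⁻¹) ?_ ?_ (fun v _ => inv_inv v) (fun v _ => inv_inv v) ?_
  · intro v hv
    rwa [mem_bruhatInterval, ← bruhatLE_inv_iff, inv_inv, ← bruhatLE_inv_iff (y := w), inv_inv,
      ← mem_bruhatInterval]
  · intro v hv
    rwa [mem_bruhatInterval, bruhatLE_inv_iff, bruhatLE_inv_iff, ← mem_bruhatInterval]
  · intro v _
    rw [← outDegree_inv cs u w, inv_inv]

theorem sum_bruhatInterval_eq_zero_of_isLeftDescent {u w : W} {i : B}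
    (hu : ¬cs.IsLeftDescent u i) (hw : cs.IsLeftDescent w i) :
    ∑ v ∈ bruhatInterval cs u w, (-1 : ℤ) ^ outDegree cs u w v = 0 := by
  simp only [outDegree_eq_ncard]
  refine sum_neg_one_pow_ncard_eq_zero_of_involution _ cs.length
    (fun _ => cs.simple_mul_simple_cancel_left i) (fun v hv => ?_) (fun _ _ h => h.length_lt)
    (fun v => cs.length_simple_mul_ne v i)
    (fun _ h => bruhatEdge_simple_mul_of_not_isLeftDescent h.not_gt)
    (fun _ _ hne h => h.simple_mul hne)
  rw [mem_bruhatInterval] at hv ⊢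
  exact ⟨hv.1.le_simple_mul hu, hv.2.simple_mul_le hw⟩

end BruhatInterval

open scoped Classical in
theorem noncritical_out_eulerian_general [Fintype W]
    (cs : CoxeterSystem M W) (u w : W)
    (hnc : ¬ (∀ i : B, cs.IsLeftDescent w i → cs.IsLeftDescent u i) ∨
           ¬ (∀ i : B, cs.IsRightDescent w i → cs.IsRightDescent u i)) :
    ∑ v ∈ Finset.univ.filter (fun v => bruhatLE cs u v ∧ bruhatLE cs v w),
      (-1 : ℤ) ^ Set.ncard {v' : W | bruhatLE cs u v' ∧ bruhatLE cs v' w ∧ bruhatEdge cs v v'}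
      = 0 := by
  change ∑ v ∈ bruhatInterval cs u w, (-1 : ℤ) ^ outDegree cs u w v = 0
  rcases hnc with hL | hR
  · push Not at hL
    obtain ⟨i, hw, hu⟩ := hL
    exact sum_bruhatInterval_eq_zero_of_isLeftDescent cs hu hw
  · push Not at hR
    obtain ⟨i, hw, hu⟩ := hR
    rw [← sum_bruhatInterval_inv]
    exact sum_bruhatInterval_eq_zero_of_isLeftDescent cs (by rwa [isLeftDescent_inv_iff])
      (by rwa [isLeftDescent_inv_iff])

open scoped Classical in
/-- Out-Eulerian property of noncritical Bruhat intervals. -/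
theorem noncritical_out_eulerian [Fintype W]
    (cs : CoxeterSystem M W) (u w : W) (huw : bruhatLE cs u w)
    (hnc : ¬ (∀ i : B, cs.IsLeftDescent w i → cs.IsLeftDescent u i) ∨
           ¬ (∀ i : B, cs.IsRightDescent w i → cs.IsRightDescent u i)) :
    ∑ v ∈ Finset.univ.filter (fun v => bruhatLE cs u v ∧ bruhatLE cs v w),
      (-1 : ℤ) ^ Set.ncard {v' : W | bruhatLE cs u v' ∧ bruhatLE cs v' w ∧ bruhatEdge cs v v'}
      = 0 :=
  noncritical_out_eulerian_general cs u w hnc
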